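/- (Theorem 2, coordinate version.) Let U ⊆ ℝⁿ be open with a metric g and an affine connection D given by Christoffel symbols Γ, let Ω be the Kähler form of (J^D, g̃^D) on TU = U × ℝⁿ, and let φ_g : U × ℝⁿ → U × ℝⁿ be the map φ_g(x,y) = (x, G(x)y), where G(x) is the matrix of g(x) in the standard basis (so the second component represents the covector g(x)(y,·)). Let Ω* be the constant 2-form on ℝⁿ × ℝⁿ given by Ω*((u,p),(v,q)) = ⟨u,q⟩ − ⟨v,p⟩ (the canonical symplectic form Σ dxⁱ∧dz_i of the cotangent bundle). Then the pullback φ_g*Ω*, defined by (φ_g*Ω*)(a)(A,B) = Ω*((fderiv ℝ φ_g a)(A), (fderiv ℝ φ_g a)(B)), coincides with Ω on TU if and only if the dual connection D* of D with respect to g is torsion-free, i.e. T^{D*}(x) = 0 for all x ∈ U. -/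

import Mathlib

/-!
STATEMENT 5 (Theorem 2): the pullback φ_g*Ω* of the canonical symplectic form of
the cotangent bundle coincides with the Kähler form Ω on TU iff the dual
connection D* is torsion-free.
-/

open scoped BigOperators

/-- Torsion of the connection with Christoffel symbols `Γ`. -/
noncomputable def torsion {n : ℕ}
    (Γ : (Fin n → ℝ) → (Fin n → ℝ) →L[ℝ] (Fin n → ℝ) →L[ℝ] (Fin n → ℝ))
    (x v w : Fin n → ℝ) : Fin n → ℝ :=
  Γ x v w - Γ x w v

/-- The almost complex structure `J^D` (with `J^D(v^H) = v^V`, `J^D(v^V) = −v^H`,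
where `v^H = (v, −Γ(x)(v)(ξ))`, `v^V = (0,v)`). -/
noncomputable def Jstr {n : ℕ}
    (Γ : (Fin n → ℝ) → (Fin n → ℝ) →L[ℝ] (Fin n → ℝ) →L[ℝ] (Fin n → ℝ))
    (x ξ : Fin n → ℝ) (A : (Fin n → ℝ) × (Fin n → ℝ)) :
    (Fin n → ℝ) × (Fin n → ℝ) :=
  (-(A.2 + Γ x A.1 ξ), A.1 + Γ x (A.2 + Γ x A.1 ξ) ξ)

/-- The Sasaki metric `g̃^D` at `(x,ξ)`. -/
noncomputable def sasaki {n : ℕ}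
    (g : (Fin n → ℝ) → (Fin n → ℝ) →L[ℝ] (Fin n → ℝ) →L[ℝ] ℝ)
    (Γ : (Fin n → ℝ) → (Fin n → ℝ) →L[ℝ] (Fin n → ℝ) →L[ℝ] (Fin n → ℝ))
    (x ξ : Fin n → ℝ) (A B : (Fin n → ℝ) × (Fin n → ℝ)) : ℝ :=
  g x A.1 B.1 + g x (A.2 + Γ x A.1 ξ) (B.2 + Γ x B.1 ξ)

/-- The Kähler form `Ω(A,B) = g̃^D(J^D A, B)`. -/
noncomputable def kform {n : ℕ}
    (g : (Fin n → ℝ) → (Fin n → ℝ) →L[ℝ] (Fin n → ℝ) →L[ℝ] ℝ)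
    (Γ : (Fin n → ℝ) → (Fin n → ℝ) →L[ℝ] (Fin n → ℝ) →L[ℝ] (Fin n → ℝ))
    (x ξ : Fin n → ℝ) (A B : (Fin n → ℝ) × (Fin n → ℝ)) : ℝ :=
  sasaki g Γ x ξ (Jstr Γ x ξ A) B

/-- The natural map `φ_g : TU → T*U`, `φ_g(x,y) = (x, G(x)y)` where `G(x)` is the
matrix of `g(x)` in the standard basis, i.e. `(G(x)y)_i = g(x)(y, e_i)`. -/
noncomputable def phig {n : ℕ}
    (g : (Fin n → ℝ) → (Fin n → ℝ) →L[ℝ] (Fin n → ℝ) →L[ℝ] ℝ)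
    (p : (Fin n → ℝ) × (Fin n → ℝ)) : (Fin n → ℝ) × (Fin n → ℝ) :=
  (p.1, fun i => g p.1 p.2 (Pi.single i 1))

/-- The canonical symplectic form of the cotangent bundle (constant coefficients):
`Ω*((u,p),(v,q)) = ⟨u,q⟩ − ⟨v,p⟩`. -/
def omegaStar {n : ℕ} (A B : (Fin n → ℝ) × (Fin n → ℝ)) : ℝ :=
  (∑ i, A.1 i * B.2 i) - (∑ i, B.1 i * A.2 i)

section Aux
open scoped BigOperators

lemma sum_mul_single {n : ℕ} (L : (Fin n → ℝ) →L[ℝ] ℝ) (v : Fin n → ℝ) :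
    ∑ i, v i * L (Pi.single i 1) = L v := by
  conv_rhs => rw [pi_eq_sum_univ v]
  rw [map_sum]
  refine Finset.sum_congr rfl fun i _ => ?_
  rw [map_smul, smul_eq_mul]
  congr 2
  ext j
  simp [Pi.single_apply, eq_comm]

noncomputable def evC (n : ℕ) : ((Fin n → ℝ) →L[ℝ] ℝ) →L[ℝ] (Fin n → ℝ) :=
  ContinuousLinearMap.pi fun i => ContinuousLinearMap.apply ℝ ℝ (Pi.single i 1)

variable {n : ℕ} {U : Set (Fin n → ℝ)}
  {g : (Fin n → ℝ) → (Fin n → ℝ) →L[ℝ] (Fin n → ℝ) →L[ℝ] ℝ}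

lemma fderiv_ev (x : Fin n → ℝ) (hgd : DifferentiableAt ℝ g x) (u v w : Fin n → ℝ) :
    fderiv ℝ (fun p => g p v w) x u = fderiv ℝ g x u v w := by
  have h := HasFDerivAt.comp x (f := g) (𝕜 := ℝ) ((ContinuousLinearMap.apply ℝ ℝ w).comp
      (ContinuousLinearMap.apply ℝ ((Fin n → ℝ) →L[ℝ] ℝ) v)).hasFDerivAt
      hgd.hasFDerivAt
  have h2 : (fun p => g p v w) = (⇑(((ContinuousLinearMap.apply ℝ ℝ) w).comp
      ((ContinuousLinearMap.apply ℝ ((Fin n → ℝ) →L[ℝ] ℝ)) v)) ∘ g) := rfl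
  rw [h2, h.fderiv]
  rfl

lemma fderiv_g_symm (hU : IsOpen U) (hg : ContDiffOn ℝ (⊤ : ℕ∞) g U)
    (hgsymm : ∀ x ∈ U, ∀ v w : Fin n → ℝ, g x v w = g x w v)
    {x : Fin n → ℝ} (hx : x ∈ U) (u v w : Fin n → ℝ) :
    fderiv ℝ g x u v w = fderiv ℝ g x u w v := by
  have hgd : DifferentiableAt ℝ g x :=
    (hg.contDiffAt (hU.mem_nhds hx)).differentiableAt (by simp)
  have heq : (fun p => g p v w) =ᶠ[nhds x] (fun p => g p w v) := by
    filter_upwards [hU.mem_nhds hx] with p hp using hgsymm p hp v w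
  have := heq.fderiv_eq (𝕜 := ℝ)
  rw [← fderiv_ev x hgd u v w, ← fderiv_ev x hgd u w v, this]

set_option maxHeartbeats 1000000 in
lemma fderiv_phig_apply (hU : IsOpen U) (hg : ContDiffOn ℝ (⊤ : ℕ∞) g U)
    (a : (Fin n → ℝ) × (Fin n → ℝ)) (ha : a.1 ∈ U) (A : (Fin n → ℝ) × (Fin n → ℝ)) :
    fderiv ℝ (phig g) a A
      = (A.1, fun i => fderiv ℝ g a.1 A.1 a.2 (Pi.single i 1)
          + g a.1 A.2 (Pi.single i 1)) := by
  have hgd : DifferentiableAt ℝ g a.1 :=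
    (hg.contDiffAt (hU.mem_nhds ha)).differentiableAt (by simp)
  have hc : HasFDerivAt (fun p : (Fin n → ℝ) × (Fin n → ℝ) => g p.1)
      ((fderiv ℝ g a.1).comp (ContinuousLinearMap.fst ℝ (Fin n → ℝ) (Fin n → ℝ))) a :=
    HasFDerivAt.comp a (f := Prod.fst) (g := g) (𝕜 := ℝ) hgd.hasFDerivAt hasFDerivAt_fst
  have hh : HasFDerivAt (fun p : (Fin n → ℝ) × (Fin n → ℝ) => (g p.1) p.2)
      ((g a.1).comp (ContinuousLinearMap.snd ℝ (Fin n → ℝ) (Fin n → ℝ)) +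
        ((fderiv ℝ g a.1).comp (ContinuousLinearMap.fst ℝ (Fin n → ℝ) (Fin n → ℝ))).flip a.2)
      a := by
    have h0 := HasFDerivAt.clm_apply (c := fun p : (Fin n → ℝ) × (Fin n → ℝ) => g p.1)
      (u := fun p => p.2) hc hasFDerivAt_snd
    beta_reduce at h0
    exact h0
  have hphig : HasFDerivAt
      (fun p : (Fin n → ℝ) × (Fin n → ℝ) => (p.1, evC n ((g p.1) p.2)))
      ((ContinuousLinearMap.fst ℝ (Fin n → ℝ) (Fin n → ℝ)).prod
        ((evC n).comp
          ((g a.1).comp (ContinuousLinearMap.snd ℝ (Fin n → ℝ) (Fin n → ℝ)) +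
            ((fderiv ℝ g a.1).comp
              (ContinuousLinearMap.fst ℝ (Fin n → ℝ) (Fin n → ℝ))).flip a.2))) a :=
    HasFDerivAt.prodMk hasFDerivAt_fst (HasFDerivAt.comp a (𝕜 := ℝ) (evC n).hasFDerivAt hh)
  have hfun : phig g = fun p : (Fin n → ℝ) × (Fin n → ℝ) => (p.1, evC n ((g p.1) p.2)) := by
    funext p
    refine Prod.ext rfl ?_
    funext i
    simp [phig, evC]
  rw [hfun, hphig.fderiv]
  refine Prod.ext rfl ?_
  funext i
  simp [evC]
  ring

lemma key_identity (hU : IsOpen U) (hg : ContDiffOn ℝ (⊤ : ℕ∞) g U)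
    (hgsymm : ∀ x ∈ U, ∀ v w : Fin n → ℝ, g x v w = g x w v)
    (Γ : (Fin n → ℝ) → (Fin n → ℝ) →L[ℝ] (Fin n → ℝ) →L[ℝ] (Fin n → ℝ))
    (Γs : (Fin n → ℝ) → (Fin n → ℝ) →L[ℝ] (Fin n → ℝ) →L[ℝ] (Fin n → ℝ))
    (hdual : ∀ x ∈ U, ∀ v y z : Fin n → ℝ,
      fderiv ℝ g x v y z = g x (Γs x v y) z + g x y (Γ x v z))
    (a : (Fin n → ℝ) × (Fin n → ℝ)) (ha : a.1 ∈ U)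
    (A B : (Fin n → ℝ) × (Fin n → ℝ)) :
    omegaStar (fderiv ℝ (phig g) a A) (fderiv ℝ (phig g) a B)
      = kform g Γ a.1 a.2 A B + g a.1 (torsion Γs a.1 B.1 A.1) a.2 := by
  rw [fderiv_phig_apply hU hg a ha A, fderiv_phig_apply hU hg a ha B]
  unfold omegaStar
  simp only [mul_add, Finset.sum_add_distrib, sum_mul_single]
  rw [fderiv_g_symm hU hg hgsymm ha B.1 a.2 A.1, fderiv_g_symm hU hg hgsymm ha A.1 a.2 B.1,
      hdual a.1 ha B.1 A.1 a.2, hdual a.1 ha A.1 B.1 a.2]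
  unfold kform sasaki Jstr torsion
  simp only [map_add, map_sub, map_neg, ContinuousLinearMap.add_apply,
    ContinuousLinearMap.neg_apply, ContinuousLinearMap.sub_apply]
  linear_combination (hgsymm a.1 ha B.2 A.1) + (hgsymm a.1 ha (Γ a.1 A.1 a.2) B.1)


end Aux

theorem statement5 (n : ℕ) (hn : 1 ≤ n) (U : Set (Fin n → ℝ)) (hU : IsOpen U)
    (g : (Fin n → ℝ) → (Fin n → ℝ) →L[ℝ] (Fin n → ℝ) →L[ℝ] ℝ)
    (hg : ContDiffOn ℝ (⊤ : ℕ∞) g U)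
    (hgsymm : ∀ x ∈ U, ∀ v w : Fin n → ℝ, g x v w = g x w v)
    (hgpos : ∀ x ∈ U, ∀ v : Fin n → ℝ, v ≠ 0 → 0 < g x v v)
    (Γ : (Fin n → ℝ) → (Fin n → ℝ) →L[ℝ] (Fin n → ℝ) →L[ℝ] (Fin n → ℝ))
    (hΓ : ContDiffOn ℝ (⊤ : ℕ∞) Γ U)
    -- the dual connection D* with Christoffel symbols Γs
    (Γs : (Fin n → ℝ) → (Fin n → ℝ) →L[ℝ] (Fin n → ℝ) →L[ℝ] (Fin n → ℝ))
    (hΓs : ContDiffOn ℝ (⊤ : ℕ∞) Γs U)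
    (hdual : ∀ x ∈ U, ∀ v y z : Fin n → ℝ,
      fderiv ℝ g x v y z = g x (Γs x v y) z + g x y (Γ x v z)) :
    (∀ a : (Fin n → ℝ) × (Fin n → ℝ), a.1 ∈ U →
        ∀ A B : (Fin n → ℝ) × (Fin n → ℝ),
          omegaStar (fderiv ℝ (phig g) a A) (fderiv ℝ (phig g) a B)
            = kform g Γ a.1 a.2 A B)
      ↔ (∀ x ∈ U, ∀ v w : Fin n → ℝ, torsion Γs x v w = 0) := by
  constructor
  · intro h x hx v w
    by_contra ht
    have hk := key_identity hU hg hgsymm Γ Γs hdual (x, torsion Γs x v w) hx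
      (v, (0 : Fin n → ℝ)) (w, (0 : Fin n → ℝ))
    rw [h (x, torsion Γs x v w) hx (v, 0) (w, 0)] at hk
    dsimp only at hk
    have h0 : g x (torsion Γs x w v) (torsion Γs x v w) = 0 := by linarith
    have hneg : torsion Γs x w v = - torsion Γs x v w := by
      unfold torsion; abel
    rw [hneg, map_neg, ContinuousLinearMap.neg_apply] at h0
    have := hgpos x hx _ ht
    linarith
  · intro h a ha A B
    rw [key_identity hU hg hgsymm Γ Γs hdual a ha A B, h a.1 ha B.1 A.1]
    simp
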